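/- arXiv:math/9803070 — 4 statements merged into one kernel-verified Lean document; each statement's English description precedes it below -/
import Mathlib

section
/- There exists a (unique) k-algebra homomorphism φ : U → U ⊗_σ U satisfying φ(x_i) = x_i ⊗ 1 + 1 ⊗ x_i for all i = 1, …, n. -/
open scoped TensorProduct

/-- The Cartan matrix of type `A_n`. -/
def cartanA (n : ℕ) (i j : Fin n) : ℤ :=
  if i = j then 2
  else if (i : ℕ) + 1 = (j : ℕ) ∨ (j : ℕ) + 1 = (i : ℕ) then -1
  else 0

/-- For `α, γ ∈ ℕⁿ`, `c(α,γ) = ∑_{i,j} a_{ij} α_i γ_j` with `A` the Cartan matrix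
of type `A_n`. -/
def cpair {n : ℕ} (α γ : Fin n → ℕ) : ℤ :=
  ∑ i : Fin n, ∑ j : Fin n, cartanA n i j * (α i : ℤ) * (γ j : ℤ)

/-- The quantum Serre relations of type `A_n` hold for the family `y`. -/
def serreCond (k : Type) [CommRing k] (q : kˣ) {n : ℕ} {B : Type} [Ring B] [Algebra k B]
    (y : Fin n → B) : Prop :=
  (∀ i j : Fin n, 1 < |((i : ℕ) : ℤ) - ((j : ℕ) : ℤ)| → y i * y j = y j * y i) ∧
  (∀ i j : Fin n, |((i : ℕ) : ℤ) - ((j : ℕ) : ℤ)| = 1 →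
    y i ^ 2 * y j - ((q : k) + ((q⁻¹ : kˣ) : k)) • (y i * y j * y i) + y j * y i ^ 2 = 0)

/-- `U`, with distinguished generators `x`, is a presentation of `U_q^+(sl_{n+1})`:
the quotient of the free associative unital `k`-algebra on `x_1, …, x_n` by the
two-sided ideal generated by the quantum Serre relations.  This is expressed by:
the relations hold in `U`, the `x i` generate `U`, and `U` has the corresponding
universal (lifting) property. -/
def IsUqPlus (k : Type) [CommRing k] (q : kˣ) {n : ℕ} (U : Type) [Ring U] [Algebra k U]
    (x : Fin n → U) : Prop :=
  serreCond k q x ∧ Algebra.adjoin k (Set.range x) = ⊤ ∧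
    ∀ (B : Type) [Ring B] [Algebra k B] (y : Fin n → B),
      serreCond k q y → ∃ f : U →ₐ[k] B, ∀ i, f (x i) = y i

theorem cartanA_self' {n : ℕ} (i : Fin n) : cartanA n i i = 2 := by simp [cartanA]
theorem cartanA_adj' {n : ℕ} (i j : Fin n) (h : |((i : ℕ) : ℤ) - ((j : ℕ) : ℤ)| = 1) :
    cartanA n i j = -1 := by
  have h1 : (i:ℕ) + 1 = (j:ℕ) ∨ (j:ℕ) + 1 = (i:ℕ) := by
    rcases (abs_eq (by norm_num)).mp h with h' | h' <;> omega
  have h2 : i ≠ j := by intro h'; subst h'; omega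
  simp [cartanA, h1, h2]
theorem cartanA_far' {n : ℕ} (i j : Fin n) (h : 1 < |((i : ℕ) : ℤ) - ((j : ℕ) : ℤ)|) :
    cartanA n i j = 0 := by
  rw [lt_abs] at h
  have h1 : ¬((i:ℕ) + 1 = (j:ℕ) ∨ (j:ℕ) + 1 = (i:ℕ)) := by omega
  have h2 : i ≠ j := by intro h'; subst h'; omega
  simp [cartanA, h1, h2]
theorem cpair_add_left' {n : ℕ} (α α' γ : Fin n → ℕ) : cpair (α+α') γ = cpair α γ + cpair α' γ := by
  simp only [cpair, Pi.add_apply, Nat.cast_add, ← Finset.sum_add_distrib]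
  congr 1; ext i; congr 1; ext j; ring
theorem cpair_add_right' {n : ℕ} (α γ γ' : Fin n → ℕ) : cpair α (γ+γ') = cpair α γ + cpair α γ' := by
  simp only [cpair, Pi.add_apply, Nat.cast_add, ← Finset.sum_add_distrib]
  congr 1; ext i; congr 1; ext j; ring
theorem cpair_zero_left' {n : ℕ} (γ : Fin n → ℕ) : cpair 0 γ = 0 := by simp [cpair]
theorem cpair_zero_right' {n : ℕ} (α : Fin n → ℕ) : cpair α 0 = 0 := by simp [cpair]
theorem cpair_single' {n : ℕ} (i j : Fin n) :
    cpair (Pi.single i 1) (Pi.single j 1) = cartanA n i j := by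
  simp [cpair, Pi.single_apply, mul_ite, ite_mul, Finset.sum_ite_eq']

theorem aux_serre {k U W : Type} [CommRing k] (q : kˣ) {n : ℕ}
    [Ring U] [Algebra k U] [Ring W] [Algebra k W]
    (𝒜 : (Fin n → ℕ) → Submodule k U) [GradedAlgebra 𝒜]
    (x : Fin n → U) (hx : ∀ i, x i ∈ 𝒜 (Pi.single i 1))
    (hxc : serreCond k q x)
    (f : U → U → W)
    (hadd1 : ∀ u u' v : U, f (u+u') v = f u v + f u' v)
    (hsmul1 : ∀ (c : k) (u v : U), f (c•u) v = c • f u v)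
    (hadd2 : ∀ u v v' : U, f u (v+v') = f u v + f u v')
    (hsmul2 : ∀ (c : k) (u v : U), f u (c•v) = c • f u v)
    (key : ∀ (β γ : Fin n → ℕ) (u v u' v' : U), v ∈ 𝒜 β → u' ∈ 𝒜 γ →
       f u v * f u' v' = ((q ^ cpair β γ : kˣ) : k) • f (u*u') (v*v')) :
    serreCond k q (fun i => f (x i) 1 + f 1 (x i)) := by
  obtain ⟨hxcomm, hxserre⟩ := hxc
  have onem : (1:U) ∈ 𝒜 0 := SetLike.one_mem_graded 𝒜
  have kL : ∀ (γ : Fin n → ℕ) (u u' v' : U), u' ∈ 𝒜 γ →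
      f u 1 * f u' v' = f (u * u') v' := by
    intro γ u u' v' h
    rw [key 0 γ u 1 u' v' onem h, cpair_zero_left', zpow_zero, Units.val_one, one_smul, one_mul]
  have kR : ∀ (β : Fin n → ℕ) (u v v' : U), v ∈ 𝒜 β →
      f u v * f 1 v' = f u (v * v') := by
    intro β u v v' h
    rw [key β 0 u v 1 v' h onem, cpair_zero_right', zpow_zero, Units.val_one, one_smul, mul_one]
  constructor
  · -- commuting case
    intro i j hij
    simp only []
    have ha := hx i; have hb := hx j
    have cab : cpair (Pi.single i 1) (Pi.single j (1:ℕ)) = 0 := by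
      rw [cpair_single', cartanA_far' i j hij]
    have cba : cpair (Pi.single j 1) (Pi.single i (1:ℕ)) = 0 := by
      rw [cpair_single', cartanA_far' j i (by rwa [abs_sub_comm] at hij)]
    have C1 : f 1 (x i) * f (x j) 1 = f (x j) (x i) := by
      rw [key _ _ 1 (x i) (x j) 1 ha hb, cab, zpow_zero, Units.val_one, one_smul, one_mul, mul_one]
    have C2 : f 1 (x j) * f (x i) 1 = f (x i) (x j) := by
      rw [key _ _ 1 (x j) (x i) 1 hb ha, cba, zpow_zero, Units.val_one, one_smul, one_mul, mul_one]
    have C3 : f (x i) 1 * f (x j) 1 = f (x i * x j) 1 := kL _ (x i) (x j) 1 hb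
    have C4 : f (x i) 1 * f 1 (x j) = f (x i) (x j) := by
      have h := kL 0 (x i) 1 (x j) onem; rwa [mul_one] at h
    have C5 : f 1 (x i) * f 1 (x j) = f 1 (x i * x j) := kR _ 1 (x i) (x j) ha
    have C6 : f (x j) 1 * f (x i) 1 = f (x j * x i) 1 := kL _ (x j) (x i) 1 ha
    have C7 : f (x j) 1 * f 1 (x i) = f (x j) (x i) := by
      have h := kL 0 (x j) 1 (x i) onem; rwa [mul_one] at h
    have C8 : f 1 (x j) * f 1 (x i) = f 1 (x j * x i) := kR _ 1 (x j) (x i) hb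
    rw [add_mul, mul_add, mul_add, add_mul, mul_add, mul_add, C1, C2, C3, C4, C5, C6, C7, C8,
      hxcomm i j hij]
    abel
  · -- Serre case
    intro i j hij
    simp only []
    have ha := hx i; have hb := hx j
    set a := x i with ha'
    set b := x j with hb'
    set α := (Pi.single i 1 : Fin n → ℕ) with hα
    set β := (Pi.single j 1 : Fin n → ℕ) with hβ
    have iαα : cpair α α = 2 := by rw [cpair_single', cartanA_self']
    have iαβ : cpair α β = -1 := by rw [cpair_single', cartanA_adj' i j hij]
    have iβα : cpair β α = -1 := by
      rw [cpair_single', cartanA_adj' j i (by rwa [abs_sub_comm] at hij)]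
    have haa : a*a ∈ 𝒜 (α+α) := SetLike.mul_mem_graded ha ha
    have hab2 : a*b ∈ 𝒜 (α+β) := SetLike.mul_mem_graded ha hb
    have cααβ : cpair (α+α) β = -2 := by rw [cpair_add_left', iαβ]; ring
    have cαβα : cpair (α+β) α = 1 := by rw [cpair_add_left', iαα, iβα]; ring
    have cβαα : cpair β (α+α) = -2 := by rw [cpair_add_right', iβα]; ring
    have vQ2 : ((q ^ (2:ℤ) : kˣ) : k) = (q:k) * (q:k) := by rw [zpow_two, Units.val_mul]
    have vR : ((q ^ (-1:ℤ) : kˣ) : k) = ((q⁻¹ : kˣ):k) := by rw [zpow_neg_one]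
    have vR2 : ((q ^ (-2:ℤ) : kˣ) : k) = ((q⁻¹ : kˣ):k) * ((q⁻¹ : kˣ):k) := by
      rw [show (-2:ℤ) = (-1) + (-1) by ring, zpow_add, zpow_neg_one, Units.val_mul]
    have vQ1 : ((q ^ (1:ℤ) : kˣ) : k) = (q:k) := by rw [zpow_one]
    -- no-scalar products
    have A1 : f a 1 * f a 1 = f (a*a) 1 := kL α a a 1 ha
    have A2 : f a 1 * f 1 a = f a a := by have h := kL 0 a 1 a onem; rwa [mul_one] at h
    have A3 : f 1 a * f 1 a = f 1 (a*a) := kR α 1 a a ha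
    have A4 : f (a*a) 1 * f b 1 = f (a*a*b) 1 := kL β (a*a) b 1 hb
    have A5 : f (a*a) 1 * f 1 b = f (a*a) b := by
      have h := kL 0 (a*a) 1 b onem; rwa [mul_one] at h
    have A6 : f a a * f 1 b = f a (a*b) := kR α a a b ha
    have A7 : f 1 (a*a) * f 1 b = f 1 (a*a*b) := kR (α+α) 1 (a*a) b haa
    have A8 : f a 1 * f b 1 = f (a*b) 1 := kL β a b 1 hb
    have A9 : f a 1 * f 1 b = f a b := by have h := kL 0 a 1 b onem; rwa [mul_one] at h
    have A10 : f 1 a * f 1 b = f 1 (a*b) := kR α 1 a b ha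
    have A11 : f (a*b) 1 * f a 1 = f (a*b*a) 1 := kL α (a*b) a 1 ha
    have A12 : f (a*b) 1 * f 1 a = f (a*b) a := by
      have h := kL 0 (a*b) 1 a onem; rwa [mul_one] at h
    have A13 : f a b * f 1 a = f a (b*a) := kR β a b a hb
    have A14 : f b a * f 1 a = f b (a*a) := kR α b a a ha
    have A15 : f 1 (a*b) * f 1 a = f 1 (a*b*a) := kR (α+β) 1 (a*b) a hab2
    have A16 : f b 1 * f (a*a) 1 = f (b*(a*a)) 1 := kL (α+α) b (a*a) 1 haa
    have A17 : f b 1 * f a a = f (b*a) a := kL α b a a ha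
    have A18 : f b 1 * f 1 (a*a) = f b (a*a) := by
      have h := kL 0 b 1 (a*a) onem; rwa [mul_one] at h
    have A19 : f 1 b * f 1 (a*a) = f 1 (b*(a*a)) := kR β 1 b (a*a) hb
    -- scalar products
    have N1 : f 1 a * f a 1 = ((q:k) * (q:k)) • f a a := by
      rw [key α α 1 a a 1 ha ha, iαα, vQ2, one_mul, mul_one]
    have N2 : f a a * f b 1 = ((q⁻¹:kˣ):k) • f (a*b) a := by
      rw [key α β a a b 1 ha hb, iαβ, vR, mul_one]
    have N3 : f 1 (a*a) * f b 1 = (((q⁻¹:kˣ):k) * ((q⁻¹:kˣ):k)) • f b (a*a) := by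
      rw [key (α+α) β 1 (a*a) b 1 haa hb, cααβ, vR2, one_mul, mul_one]
    have N4 : f a b * f a 1 = ((q⁻¹:kˣ):k) • f (a*a) b := by
      rw [key β α a b a 1 hb ha, iβα, vR, mul_one]
    have N5 : f b a * f a 1 = ((q:k) * (q:k)) • f (b*a) a := by
      rw [key α α b a a 1 ha ha, iαα, vQ2, mul_one]
    have N6 : f 1 (a*b) * f a 1 = (q:k) • f a (a*b) := by
      rw [key (α+β) α 1 (a*b) a 1 hab2 ha, cαβα, vQ1, one_mul, mul_one]
    have N7 : f 1 b * f (a*a) 1 = (((q⁻¹:kˣ):k) * ((q⁻¹:kˣ):k)) • f (a*a) b := by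
      rw [key β (α+α) 1 b (a*a) 1 hb haa, cβαα, vR2, one_mul, mul_one]
    have N8 : f 1 b * f a a = ((q⁻¹:kˣ):k) • f a (b*a) := by
      rw [key β α 1 b a a hb ha, iβα, vR, one_mul]
    have N9 : f 1 a * f b 1 = ((q⁻¹:kˣ):k) • f b a := by
      rw [key α β 1 a b 1 ha hb, iαβ, vR, one_mul, mul_one]
    -- Serre relation in U, transported
    have h0 := hxserre i j hij
    rw [pow_two] at h0
    have hS0 : a*a*b = ((q:k) + ((q⁻¹:kˣ):k)) • (a*b*a) - b*(a*a) := by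
      rw [eq_sub_iff_add_eq, ← sub_eq_zero, ← h0]; abel
    have hsub1 : ∀ u u' v : U, f (u - u') v = f u v - f u' v := by
      intro u u' v
      rw [sub_eq_add_neg, hadd1, ← neg_one_smul k u', hsmul1, neg_one_smul, ← sub_eq_add_neg]
    have hsub2 : ∀ u v v' : U, f u (v - v') = f u v - f u v' := by
      intro u v v'
      rw [sub_eq_add_neg, hadd2, ← neg_one_smul k v', hsmul2, neg_one_smul, ← sub_eq_add_neg]
    have hS1 : f (a*a*b) 1 = ((q:k) + ((q⁻¹:kˣ):k)) • f (a*b*a) 1 - f (b*(a*a)) 1 := by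
      rw [hS0, hsub1, hsmul1]
    have hS2 : f 1 (a*a*b) = ((q:k) + ((q⁻¹:kˣ):k)) • f 1 (a*b*a) - f 1 (b*(a*a)) := by
      rw [hS0, hsub2, hsmul2]
    have hQR : (q:k) * ((q⁻¹:kˣ):k) = 1 := Units.mul_inv q
    rw [pow_two]
    simp only [mul_add, add_mul, smul_mul_assoc, mul_smul_comm, smul_add,
      A1, A2, A3, A4, A5, A6, A7, A8, A9, A10, A11, A12, A13, A14, A15, A16, A17, A18, A19,
      N1, N2, N3, N4, N5, N6, N7, N8, N9]
    rw [hS1, hS2]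
    match_scalars
    all_goals (first | ring1 | linear_combination (q:k) * hQR | linear_combination -hQR | linear_combination (-(q:k)*(q:k) - (q:k)*((q⁻¹:kˣ):k) - 1) * hQR)


/-- there exists a unique `k`-algebra homomorphism `φ : U → U ⊗_σ U` with
`φ(x_i) = x_i ⊗ 1 + 1 ⊗ x_i` for all `i`.  Here `U ⊗_σ U` is presented as a `k`-algebra `W`
whose underlying `k`-module is identified with `U ⊗_k U` via `e`, with unit `1 ⊗ 1` and
multiplication determined on homogeneous elements by
`(a ⊗ b)(c ⊗ d) = q^{c(deg b, deg c)} (a c) ⊗ (b d)`. -/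
theorem stmt1 (k U W : Type) [CommRing k] (q : kˣ) (n : ℕ) (hn : 1 ≤ n)
    [Ring U] [Algebra k U] (x : Fin n → U) (hU : IsUqPlus k q U x)
    (𝒜 : (Fin n → ℕ) → Submodule k U) [GradedAlgebra 𝒜]
    (hx𝒜 : ∀ i : Fin n, x i ∈ 𝒜 (Pi.single i 1))
    [Ring W] [Algebra k W] (e : (U ⊗[k] U) ≃ₗ[k] W)
    (he1 : e ((1 : U) ⊗ₜ[k] (1 : U)) = 1)
    (hem : ∀ (α γ : Fin n → ℕ) (b c : U), b ∈ 𝒜 α → c ∈ 𝒜 γ → ∀ a d : U,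
      e (a ⊗ₜ[k] b) * e (c ⊗ₜ[k] d) = ((q ^ cpair α γ : kˣ) : k) • e ((a * c) ⊗ₜ[k] (b * d))) :
    ∃! φ : U →ₐ[k] W, ∀ i : Fin n,
      φ (x i) = e (x i ⊗ₜ[k] (1 : U) + (1 : U) ⊗ₜ[k] x i) := by
  obtain ⟨hxc, hadj, huniv⟩ := hU
  have hser : serreCond k q (fun i => e (x i ⊗ₜ[k] (1:U) + (1:U) ⊗ₜ[k] x i)) := by
    have h := aux_serre q 𝒜 x hx𝒜 hxc (fun u v => e (u ⊗ₜ[k] v))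
      (by intro u u' v; simp [TensorProduct.add_tmul])
      (by intro c u v; show e ((c • u) ⊗ₜ[k] v) = c • e (u ⊗ₜ[k] v); rw [← TensorProduct.smul_tmul', map_smul])
      (by intro u v v'; simp [TensorProduct.tmul_add])
      (by intro c u v; simp)
      (by intro β γ u v u' v' hv hu'; exact hem β γ v u' hv hu' u v')
    have heq : (fun i => e (x i ⊗ₜ[k] (1:U) + (1:U) ⊗ₜ[k] x i))
        = fun i => (fun u v : U => e (u ⊗ₜ[k] v)) (x i) 1 + (fun u v : U => e (u ⊗ₜ[k] v)) 1 (x i) := by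
      funext i; simp [map_add]
    rw [heq]
    exact h
  obtain ⟨φ, hφ⟩ := huniv W (fun i => e (x i ⊗ₜ[k] (1:U) + (1:U) ⊗ₜ[k] x i)) hser
  refine ⟨φ, hφ, ?_⟩
  intro ψ hψ
  apply AlgHom.ext
  intro u
  have hu : u ∈ Algebra.adjoin k (Set.range x) := by rw [hadj]; exact Algebra.mem_top
  exact Algebra.adjoin_le (S := AlgHom.equalizer ψ φ)
    (by rintro w ⟨i, rfl⟩; show ψ (x i) = φ (x i); rw [hψ i, hφ i]) hu
end

section
/- The map κ is an antipode for φ: for every u ∈ U, m((id ⊗ κ)(φ(u))) = ε(u)·1 = m((κ ⊗ id)(φ(u))), where m : U ⊗_k U → U is the multiplication map of U. -/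
/-!
Both identities are linear in `u`, and `U` is spanned by words in the generators, so it suffices
to check them on `1` and on words `v * x i` (resp. `x i * v`). Since `φ (v * x i)` is the twisted
product of `φ v` with the primitive element `x i ⊗ 1 + 1 ⊗ x i`, the right identity reduces to
`m (id ⊗ κ) (t ⋆ (x i ⊗ 1 + 1 ⊗ x i)) = 0` for every `t`. On `a ⊗ b` with `b` homogeneous of
degree `β` this is `q^c(β, eᵢ) a x i κ(b) + a κ(b x i)`, and the twisted anti-multiplicativity of
`κ` turns the second term into the negative of the first.
-/

open scoped TensorProduct

open TensorProduct

section Generation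

variable {R A M : Type*} [CommSemiring R] [Semiring A] [Algebra R A]
  [AddCommMonoid M] [Module R M]

theorem LinearMap.eq_of_adjoin_eq_top_of_mul_right {s : Set A} (hs : Algebra.adjoin R s = ⊤)
    {f g : A →ₗ[R] M} (one : f 1 = g 1) (mul_right : ∀ a, ∀ y ∈ s, f (a * y) = g (a * y)) :
    f = g := by
  refine LinearMap.ext_on (s := Submonoid.closure s) ?_ fun a ha => ?_
  · rw [← Algebra.adjoin_eq_span, hs, Algebra.top_toSubmodule]
  · induction ha using Submonoid.closure_induction_right with
    | one => exact one
    | mul_right a _ y hy _ => exact mul_right a y hy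

theorem LinearMap.eq_of_adjoin_eq_top_of_mul_left {s : Set A} (hs : Algebra.adjoin R s = ⊤)
    {f g : A →ₗ[R] M} (one : f 1 = g 1) (mul_left : ∀ y ∈ s, ∀ a, f (y * a) = g (y * a)) :
    f = g := by
  refine LinearMap.ext_on (s := Submonoid.closure s) ?_ fun a ha => ?_
  · rw [← Algebra.adjoin_eq_span, hs, Algebra.top_toSubmodule]
  · induction ha using Submonoid.closure_induction_left with
    | one => exact one
    | mul_left y hy a _ _ => exact mul_left y hy a

end Generation

section GradedTensor

variable {R ι V W N : Type*} [CommSemiring R] [DecidableEq ι]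
  [AddCommMonoid V] [Module R V] [AddCommMonoid W] [Module R W] [AddCommMonoid N] [Module R N]

theorem TensorProduct.ext_homogeneous_right (𝒲 : ι → Submodule R W) [DirectSum.Decomposition 𝒲]
    {f g : V ⊗[R] W →ₗ[R] N} (h : ∀ v i, ∀ w ∈ 𝒲 i, f (v ⊗ₜ w) = g (v ⊗ₜ w)) : f = g := by
  refine TensorProduct.ext' fun v w => ?_
  induction w using DirectSum.Decomposition.inductionOn 𝒲 with
  | zero => simp
  | homogeneous w => exact h v _ w w.2
  | add w w' hw hw' => rw [tmul_add, map_add, map_add, hw, hw']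

theorem TensorProduct.ext_homogeneous_left (𝒱 : ι → Submodule R V) [DirectSum.Decomposition 𝒱]
    {f g : V ⊗[R] W →ₗ[R] N} (h : ∀ i, ∀ v ∈ 𝒱 i, ∀ w, f (v ⊗ₜ w) = g (v ⊗ₜ w)) : f = g := by
  refine TensorProduct.ext' fun v w => ?_
  induction v using DirectSum.Decomposition.inductionOn 𝒱 with
  | zero => simp
  | homogeneous v => exact h _ v v.2 w
  | add v v' hv hv' => rw [add_tmul, map_add, map_add, hv, hv']

end GradedTensor

section TwistedAntipode

variable {k U ι : Type*} [CommRing k] [Ring U] [Algebra k U] (𝒜 : ι → Submodule k U)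

def IsTwistedTensorMul (χ : ι → ι → k) (μ : U ⊗[k] U →ₗ[k] U ⊗[k] U →ₗ[k] U ⊗[k] U) : Prop :=
  ∀ (α γ : ι) (b c : U), b ∈ 𝒜 α → c ∈ 𝒜 γ → ∀ a d : U,
    μ (a ⊗ₜ[k] b) (c ⊗ₜ[k] d) = χ α γ • ((a * c) ⊗ₜ[k] (b * d))

def IsTwistedAntiMul (χ : ι → ι → k) (κ : U →ₗ[k] U) : Prop :=
  ∀ (α β : ι) (a b : U), a ∈ 𝒜 α → b ∈ 𝒜 β → κ (a * b) = χ α β • (κ b * κ a)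

variable [DecidableEq ι] [AddMonoid ι] [GradedAlgebra 𝒜]
  {𝒜} {χ : ι → ι → k} {μ : U ⊗[k] U →ₗ[k] U ⊗[k] U →ₗ[k] U ⊗[k] U} {κ : U →ₗ[k] U}

theorem mul'_lTensor_twistedMul_primitive (hμ : IsTwistedTensorMul 𝒜 χ μ)
    (hκ : IsTwistedAntiMul 𝒜 χ κ) (hχ : ∀ β, χ β 0 = 1) {γ : ι} {y : U} (hy : y ∈ 𝒜 γ)
    (hκy : κ y = -y) (t : U ⊗[k] U) :
    LinearMap.mul' k U (LinearMap.lTensor U κ (μ t (y ⊗ₜ 1 + 1 ⊗ₜ y))) = 0 := by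
  suffices h : LinearMap.mul' k U ∘ₗ LinearMap.lTensor U κ ∘ₗ μ.flip (y ⊗ₜ 1 + 1 ⊗ₜ y) = 0 from
    LinearMap.congr_fun h t
  refine TensorProduct.ext_homogeneous_right 𝒜 fun a β b hb => ?_
  simp [hμ β γ b y hb hy, hμ β 0 b 1 hb (SetLike.one_mem_graded 𝒜), hχ, hκ β γ b y hb hy, hκy,
    mul_assoc]

theorem mul'_rTensor_primitive_twistedMul (hμ : IsTwistedTensorMul 𝒜 χ μ)
    (hκ : IsTwistedAntiMul 𝒜 χ κ) (hχ : ∀ β, χ 0 β = 1) {γ : ι} {y : U} (hy : y ∈ 𝒜 γ)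
    (hκy : κ y = -y) (t : U ⊗[k] U) :
    LinearMap.mul' k U (LinearMap.rTensor U κ (μ (y ⊗ₜ 1 + 1 ⊗ₜ y) t)) = 0 := by
  suffices h : LinearMap.mul' k U ∘ₗ LinearMap.rTensor U κ ∘ₗ μ (y ⊗ₜ 1 + 1 ⊗ₜ y) = 0 from
    LinearMap.congr_fun h t
  refine TensorProduct.ext_homogeneous_left 𝒜 fun β a ha b => ?_
  simp [hμ 0 β 1 a (SetLike.one_mem_graded 𝒜) ha, hμ γ β y a hy ha, hχ, hκ γ β y a hy ha, hκy,
    mul_assoc]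

end TwistedAntipode

theorem stmt4_general (k U : Type) [CommRing k] (q : kˣ) (n : ℕ)
    [Ring U] [Algebra k U] (x : Fin n → U) (hU : IsUqPlus k q U x)
    (𝒜 : (Fin n → ℕ) → Submodule k U) [GradedAlgebra 𝒜]
    (hx𝒜 : ∀ i : Fin n, x i ∈ 𝒜 (Pi.single i 1))
    (μ : U ⊗[k] U →ₗ[k] U ⊗[k] U →ₗ[k] U ⊗[k] U)
    (hμ : ∀ (α γ : Fin n → ℕ) (b c : U), b ∈ 𝒜 α → c ∈ 𝒜 γ → ∀ a d : U,
      μ (a ⊗ₜ[k] b) (c ⊗ₜ[k] d) = ((q ^ cpair α γ : kˣ) : k) • ((a * c) ⊗ₜ[k] (b * d)))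
    (φ : U →ₗ[k] U ⊗[k] U)
    (hφ1 : φ 1 = (1 : U) ⊗ₜ[k] (1 : U))
    (hφm : ∀ a b : U, φ (a * b) = μ (φ a) (φ b))
    (hφx : ∀ i : Fin n, φ (x i) = x i ⊗ₜ[k] (1 : U) + (1 : U) ⊗ₜ[k] x i)
    (ε : U →ₐ[k] k) (hε : ∀ i : Fin n, ε (x i) = 0)
    (κ : U →ₗ[k] U)
    (hκ1 : κ 1 = 1)
    (hκx : ∀ i : Fin n, κ (x i) = -x i)
    (hκm : ∀ (α β : Fin n → ℕ) (a b : U), a ∈ 𝒜 α → b ∈ 𝒜 β →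
      κ (a * b) = ((q ^ cpair α β : kˣ) : k) • (κ b * κ a)) :
    ∀ u : U,
      LinearMap.mul' k U (TensorProduct.map LinearMap.id κ (φ u)) = algebraMap k U (ε u) ∧
      LinearMap.mul' k U (TensorProduct.map κ LinearMap.id (φ u)) = algebraMap k U (ε u) := by
  obtain ⟨-, hgen, -⟩ := hU
  have hχ_zero_right : ∀ β : Fin n → ℕ, ((q ^ cpair β 0 : kˣ) : k) = 1 := by simp [cpair]
  have hχ_zero_left : ∀ β : Fin n → ℕ, ((q ^ cpair 0 β : kˣ) : k) = 1 := by simp [cpair]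
  have right : LinearMap.mul' k U ∘ₗ LinearMap.lTensor U κ ∘ₗ φ =
      Algebra.linearMap k U ∘ₗ ε.toLinearMap := by
    refine LinearMap.eq_of_adjoin_eq_top_of_mul_right hgen (by simp [hφ1, hκ1]) ?_
    rintro a _ ⟨i, rfl⟩
    simp only [LinearMap.comp_apply, hφm, hφx,
      mul'_lTensor_twistedMul_primitive hμ hκm hχ_zero_right (hx𝒜 i) (hκx i),
      AlgHom.toLinearMap_apply, map_mul, hε, mul_zero, map_zero]
  have left : LinearMap.mul' k U ∘ₗ LinearMap.rTensor U κ ∘ₗ φ =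
      Algebra.linearMap k U ∘ₗ ε.toLinearMap := by
    refine LinearMap.eq_of_adjoin_eq_top_of_mul_left hgen (by simp [hφ1, hκ1]) ?_
    rintro _ ⟨i, rfl⟩ a
    simp only [LinearMap.comp_apply, hφm, hφx,
      mul'_rTensor_primitive_twistedMul hμ hκm hχ_zero_left (hx𝒜 i) (hκx i),
      AlgHom.toLinearMap_apply, map_mul, hε, zero_mul, map_zero]
  exact fun u => ⟨LinearMap.congr_fun right u, LinearMap.congr_fun left u⟩

/-- `κ` is an antipode for `φ`: for every `u ∈ U`,
`m((id ⊗ κ)(φ(u))) = ε(u)·1 = m((κ ⊗ id)(φ(u)))`, where `m` is the multiplication of `U`.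
Here `φ : U → U ⊗_σ U` is the algebra homomorphism with `φ(x_i) = x_i ⊗ 1 + 1 ⊗ x_i`
(`U ⊗_σ U` having multiplication `μ`), `ε` is the algebra homomorphism with `ε(x_i) = 0`,
and `κ : U → U` is `k`-linear with `κ(1) = 1`, `κ(x_i) = −x_i` and
`κ(a b) = q^{c(deg a, deg b)} κ(b) κ(a)` for homogeneous `a, b`. -/
theorem stmt4 (k U : Type) [CommRing k] (q : kˣ) (n : ℕ) (hn : 1 ≤ n)
    [Ring U] [Algebra k U] (x : Fin n → U) (hU : IsUqPlus k q U x)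
    (𝒜 : (Fin n → ℕ) → Submodule k U) [GradedAlgebra 𝒜]
    (hx𝒜 : ∀ i : Fin n, x i ∈ 𝒜 (Pi.single i 1))
    (μ : U ⊗[k] U →ₗ[k] U ⊗[k] U →ₗ[k] U ⊗[k] U)
    (hμ : ∀ (α γ : Fin n → ℕ) (b c : U), b ∈ 𝒜 α → c ∈ 𝒜 γ → ∀ a d : U,
      μ (a ⊗ₜ[k] b) (c ⊗ₜ[k] d) = ((q ^ cpair α γ : kˣ) : k) • ((a * c) ⊗ₜ[k] (b * d)))
    (φ : U →ₗ[k] U ⊗[k] U)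
    (hφ1 : φ 1 = (1 : U) ⊗ₜ[k] (1 : U))
    (hφm : ∀ a b : U, φ (a * b) = μ (φ a) (φ b))
    (hφx : ∀ i : Fin n, φ (x i) = x i ⊗ₜ[k] (1 : U) + (1 : U) ⊗ₜ[k] x i)
    (ε : U →ₐ[k] k) (hε : ∀ i : Fin n, ε (x i) = 0)
    (κ : U →ₗ[k] U)
    (hκ1 : κ 1 = 1)
    (hκx : ∀ i : Fin n, κ (x i) = -x i)
    (hκm : ∀ (α β : Fin n → ℕ) (a b : U), a ∈ 𝒜 α → b ∈ 𝒜 β →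
      κ (a * b) = ((q ^ cpair α β : kˣ) : k) • (κ b * κ a)) :
    ∀ u : U,
      LinearMap.mul' k U (TensorProduct.map LinearMap.id κ (φ u)) = algebraMap k U (ε u) ∧
      LinearMap.mul' k U (TensorProduct.map κ LinearMap.id (φ u)) = algebraMap k U (ε u) :=
  stmt4_general k U q n x hU 𝒜 hx𝒜 μ hμ φ hφ1 hφm hφx ε hε κ hκ1 hκx hκm
end

section
/- Let k be a commutative ring, V a k-module, σ : V ⊗_k V → V ⊗_k V a k-linear equivalence (invertible linear map), and φ : V → V ⊗_k V a k-linear map. If (σ ⊗ id)(id ⊗ σ)(φ ⊗ id) = (id ⊗ φ)σ and (id ⊗ σ)(σ ⊗ id)(id ⊗ φ) = (φ ⊗ id)σ, then (σ ⊗ id ⊗ id)(id ⊗ φ ⊗ id)(σ⁻¹ ⊗ id)(id ⊗ φ) = (id ⊗ id ⊗ σ)(id ⊗ φ ⊗ id)(id ⊗ σ⁻¹)(φ ⊗ id), as k-linear maps V ⊗_k V → V ⊗_k V ⊗_k V ⊗_k V. -/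
open scoped TensorProduct

/-- The map `s ⊗ id` acting on the first two factors of `V ⊗ (V ⊗ V)`. -/
noncomputable def map12 (k V : Type) [CommRing k] [AddCommGroup V] [Module k V]
    (s : V ⊗[k] V →ₗ[k] V ⊗[k] V) :
    V ⊗[k] (V ⊗[k] V) →ₗ[k] V ⊗[k] (V ⊗[k] V) :=
  (TensorProduct.assoc k V V V).toLinearMap ∘ₗ (TensorProduct.map s LinearMap.id) ∘ₗ
    (TensorProduct.assoc k V V V).symm.toLinearMap

/-- The map `f ⊗ id : V ⊗ V → V ⊗ V ⊗ V` (right-nested), for `f : V → V ⊗ V`. -/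
noncomputable def mapFst (k V : Type) [CommRing k] [AddCommGroup V] [Module k V]
    (f : V →ₗ[k] V ⊗[k] V) :
    V ⊗[k] V →ₗ[k] V ⊗[k] (V ⊗[k] V) :=
  (TensorProduct.assoc k V V V).toLinearMap ∘ₗ TensorProduct.map f LinearMap.id

/-- The map `s ⊗ id ⊗ id` acting on the first two factors of `V ⊗ (V ⊗ (V ⊗ V))`. -/
noncomputable def map12of4 (k V : Type) [CommRing k] [AddCommGroup V] [Module k V]
    (s : V ⊗[k] V →ₗ[k] V ⊗[k] V) :
    V ⊗[k] (V ⊗[k] (V ⊗[k] V)) →ₗ[k] V ⊗[k] (V ⊗[k] (V ⊗[k] V)) :=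
  (TensorProduct.assoc k V V (V ⊗[k] V)).toLinearMap ∘ₗ (TensorProduct.map s LinearMap.id) ∘ₗ
    (TensorProduct.assoc k V V (V ⊗[k] V)).symm.toLinearMap

section Helpers

open TensorProduct

variable {R M N P Q M' N' : Type*} [CommRing R]
  [AddCommGroup M] [Module R M] [AddCommGroup N] [Module R N]
  [AddCommGroup P] [Module R P] [AddCommGroup Q] [Module R Q]
  [AddCommGroup M'] [Module R M'] [AddCommGroup N'] [Module R N']

lemma map_fst_fst (f : N →ₗ[R] P) (g : M →ₗ[R] N) (x : M ⊗[R] Q) :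
    TensorProduct.map f LinearMap.id (TensorProduct.map g LinearMap.id x) =
      TensorProduct.map (f ∘ₗ g) LinearMap.id x := by
  rw [← LinearMap.comp_apply, ← TensorProduct.map_comp, LinearMap.id_comp]

lemma map_snd_snd (f : N →ₗ[R] P) (g : M →ₗ[R] N) (x : Q ⊗[R] M) :
    TensorProduct.map LinearMap.id f (TensorProduct.map LinearMap.id g x) =
      TensorProduct.map LinearMap.id (f ∘ₗ g) x := by
  rw [← LinearMap.comp_apply, ← TensorProduct.map_comp, LinearMap.id_comp]

lemma map_fst_snd_comm (f : M →ₗ[R] M') (g : N →ₗ[R] N') (x : M ⊗[R] N) :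
    TensorProduct.map f LinearMap.id (TensorProduct.map LinearMap.id g x) =
      TensorProduct.map LinearMap.id g (TensorProduct.map f LinearMap.id x) := by
  rw [← LinearMap.comp_apply, ← TensorProduct.map_comp, ← LinearMap.comp_apply,
    ← TensorProduct.map_comp, LinearMap.id_comp, LinearMap.comp_id, LinearMap.id_comp,
    LinearMap.comp_id]

end Helpers

section Pent

variable (k V : Type) [CommRing k] [AddCommGroup V] [Module k V]

open TensorProduct

/-- Pentagon identity, as linear maps. -/
lemma pent :
    TensorProduct.map (LinearMap.id : V →ₗ[k] V) (TensorProduct.assoc k V V V).toLinearMap ∘ₗ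
        (TensorProduct.assoc k V (V ⊗[k] V) V).toLinearMap ∘ₗ
        TensorProduct.map (TensorProduct.assoc k V V V).toLinearMap (LinearMap.id : V →ₗ[k] V) =
      (TensorProduct.assoc k V V (V ⊗[k] V)).toLinearMap ∘ₗ
        (TensorProduct.assoc k (V ⊗[k] V) V V).toLinearMap := by
  apply TensorProduct.ext_fourfold
  intro w x y z
  rfl

/-- pointwise pentagon -/
lemma pent_apply (u : ((V ⊗[k] V) ⊗[k] V) ⊗[k] V) :
    TensorProduct.map (LinearMap.id : V →ₗ[k] V) (TensorProduct.assoc k V V V).toLinearMap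
        ((TensorProduct.assoc k V (V ⊗[k] V) V)
          (TensorProduct.map (TensorProduct.assoc k V V V).toLinearMap
            (LinearMap.id : V →ₗ[k] V) u)) =
      (TensorProduct.assoc k V V (V ⊗[k] V)) ((TensorProduct.assoc k (V ⊗[k] V) V V) u) :=
  LinearMap.congr_fun (pent k V) u

end Pent

open TensorProduct in
/-- if `σ : V ⊗ V → V ⊗ V` is a `k`-linear equivalence and `φ : V → V ⊗ V`
is `k`-linear with `(σ ⊗ id)(id ⊗ σ)(φ ⊗ id) = (id ⊗ φ)σ` and
`(id ⊗ σ)(σ ⊗ id)(id ⊗ φ) = (φ ⊗ id)σ`, then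
`(σ ⊗ id ⊗ id)(id ⊗ φ ⊗ id)(σ⁻¹ ⊗ id)(id ⊗ φ) = (id ⊗ id ⊗ σ)(id ⊗ φ ⊗ id)(id ⊗ σ⁻¹)(φ ⊗ id)`
as `k`-linear maps `V ⊗ V → V ⊗ V ⊗ V ⊗ V`. -/
theorem stmt7 (k V : Type) [CommRing k] [AddCommGroup V] [Module k V]
    (σ : V ⊗[k] V ≃ₗ[k] V ⊗[k] V) (φ : V →ₗ[k] V ⊗[k] V)
    (h1 : map12 k V σ.toLinearMap ∘ₗ TensorProduct.map LinearMap.id σ.toLinearMap ∘ₗ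
        mapFst k V φ = TensorProduct.map LinearMap.id φ ∘ₗ σ.toLinearMap)
    (h2 : TensorProduct.map LinearMap.id σ.toLinearMap ∘ₗ map12 k V σ.toLinearMap ∘ₗ
        TensorProduct.map LinearMap.id φ = mapFst k V φ ∘ₗ σ.toLinearMap) :
    map12of4 k V σ.toLinearMap ∘ₗ TensorProduct.map LinearMap.id (mapFst k V φ) ∘ₗ
        map12 k V σ.symm.toLinearMap ∘ₗ TensorProduct.map LinearMap.id φ =
      TensorProduct.map LinearMap.id (TensorProduct.map LinearMap.id σ.toLinearMap) ∘ₗ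
        TensorProduct.map LinearMap.id (mapFst k V φ) ∘ₗ
        TensorProduct.map LinearMap.id σ.symm.toLinearMap ∘ₗ mapFst k V φ := by
  have h1' := fun y => LinearMap.congr_fun h1 y
  have h2' := fun y => LinearMap.congr_fun h2 y
  simp only [LinearMap.comp_apply] at h1' h2'
  have ccs : ∀ u : V ⊗[k] V, σ.toLinearMap (σ.symm.toLinearMap u) = u :=
    fun u => σ.apply_symm_apply u
  have comp_sis : σ.symm.toLinearMap ∘ₗ σ.toLinearMap = (LinearMap.id : V ⊗[k] V →ₗ[k] V ⊗[k] V) := by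
    apply LinearMap.ext; intro u; simp
  have a3ssi : (TensorProduct.assoc k V V V).toLinearMap ∘ₗ
      (TensorProduct.assoc k V V V).symm.toLinearMap = LinearMap.id := by
    apply LinearMap.ext; intro z; simp
  have m12ap : ∀ (t : V ⊗[k] V →ₗ[k] V ⊗[k] V) (u : V ⊗[k] (V ⊗[k] V)),
      map12 k V t u = TensorProduct.assoc k V V V
        (map t LinearMap.id ((TensorProduct.assoc k V V V).symm u)) := fun t u => rfl
  have mo4ap : ∀ (t : V ⊗[k] V →ₗ[k] V ⊗[k] V) (u : V ⊗[k] (V ⊗[k] (V ⊗[k] V))),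
      map12of4 k V t u = TensorProduct.assoc k V V (V ⊗[k] V)
        (map t LinearMap.id ((TensorProduct.assoc k V V (V ⊗[k] V)).symm u)) := fun t u => rfl
  have m12c : map12 k V σ.toLinearMap ∘ₗ (TensorProduct.assoc k V V V).toLinearMap =
      (TensorProduct.assoc k V V V).toLinearMap ∘ₗ map σ.toLinearMap LinearMap.id := by
    apply LinearMap.ext; intro y
    simp [map12, LinearMap.comp_apply]
  have m12sis : ∀ u : V ⊗[k] (V ⊗[k] V),
      map12 k V σ.symm.toLinearMap (map12 k V σ.toLinearMap u) = u := by
    intro u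
    rw [m12ap, m12ap, LinearEquiv.symm_apply_apply, map_fst_fst, comp_sis,
      TensorProduct.map_id, LinearMap.id_apply, LinearEquiv.apply_symm_apply]
  have msndsis : ∀ u : V ⊗[k] (V ⊗[k] V),
      map LinearMap.id σ.symm.toLinearMap (map LinearMap.id σ.toLinearMap u) = u := by
    intro u
    rw [map_snd_snd, comp_sis, TensorProduct.map_id, LinearMap.id_apply]
  have e1 : ∀ x : V ⊗[k] V,
      map12 k V σ.symm.toLinearMap (map LinearMap.id φ x) =
        map LinearMap.id σ.toLinearMap (mapFst k V φ (σ.symm.toLinearMap x)) := by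
    intro x
    conv_lhs => rw [← ccs x, ← h1' (σ.symm.toLinearMap x), m12sis]
  have e6 : ∀ v : V ⊗[k] V,
      map12 k V σ.toLinearMap (map LinearMap.id φ v) =
        map LinearMap.id σ.symm.toLinearMap (mapFst k V φ (σ.toLinearMap v)) := by
    intro v
    rw [← h2' v, msndsis]
  have e2 : ∀ u : V ⊗[k] (V ⊗[k] V),
      map LinearMap.id (mapFst k V φ) (map LinearMap.id σ.toLinearMap u) =
        map LinearMap.id (map LinearMap.id σ.toLinearMap)
          (map LinearMap.id (map12 k V σ.toLinearMap)
            (map LinearMap.id (map LinearMap.id φ) u)) := by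
    intro u
    rw [map_snd_snd, map_snd_snd, map_snd_snd, LinearMap.comp_assoc, h2]
  have eC1 : ∀ u : V ⊗[k] (V ⊗[k] (V ⊗[k] V)),
      map12of4 k V σ.toLinearMap (map LinearMap.id (map LinearMap.id σ.toLinearMap) u) =
        map LinearMap.id (map LinearMap.id σ.toLinearMap) (map12of4 k V σ.toLinearMap u) := by
    intro u
    rw [mo4ap, mo4ap, ← TensorProduct.map_map_assoc_symm, TensorProduct.map_map_assoc]
    simp only [TensorProduct.map_id]
    rw [map_fst_snd_comm]
  have eC2 : ∀ v : V ⊗[k] V,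
      map LinearMap.id (map LinearMap.id φ) (mapFst k V φ v) =
        (TensorProduct.assoc k V V (V ⊗[k] V))
          (map φ LinearMap.id (map LinearMap.id φ v)) := by
    intro v
    simp only [mapFst]
    rw [LinearMap.comp_apply]
    simp only [LinearEquiv.coe_coe]
    rw [TensorProduct.map_map_assoc]
    simp only [TensorProduct.map_id]
    rw [map_fst_snd_comm]
  have eQ4 : ∀ x : (V ⊗[k] V) ⊗[k] V,
      map LinearMap.id (TensorProduct.assoc k V V V).toLinearMap
          ((TensorProduct.assoc k V (V ⊗[k] V) V)
            (map (map LinearMap.id φ) LinearMap.id x)) =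
        map LinearMap.id (mapFst k V φ) ((TensorProduct.assoc k V V V) x) := by
    intro x
    rw [← TensorProduct.map_map_assoc, map_snd_snd]
    rfl
  have eQ2 : ∀ x : (V ⊗[k] (V ⊗[k] V)) ⊗[k] V,
      map LinearMap.id (map12 k V σ.toLinearMap)
          (map LinearMap.id (TensorProduct.assoc k V V V).toLinearMap
            ((TensorProduct.assoc k V (V ⊗[k] V) V) x)) =
        map LinearMap.id (TensorProduct.assoc k V V V).toLinearMap
          ((TensorProduct.assoc k V (V ⊗[k] V) V)
            (map (map LinearMap.id σ.toLinearMap) LinearMap.id x)) := by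
    intro x
    rw [← TensorProduct.map_map_assoc, map_snd_snd, map_snd_snd, m12c]
  have eQ1 : ∀ x : (V ⊗[k] (V ⊗[k] V)) ⊗[k] V,
      map12of4 k V σ.toLinearMap
          (map LinearMap.id (TensorProduct.assoc k V V V).toLinearMap
            ((TensorProduct.assoc k V (V ⊗[k] V) V) x)) =
        map LinearMap.id (TensorProduct.assoc k V V V).toLinearMap
          ((TensorProduct.assoc k V (V ⊗[k] V) V)
            (map (map12 k V σ.toLinearMap) LinearMap.id x)) := by
    intro x
    have hy : map (TensorProduct.assoc k V V V).toLinearMap LinearMap.id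
        (map (TensorProduct.assoc k V V V).symm.toLinearMap LinearMap.id x) = x := by
      rw [map_fst_fst, a3ssi, TensorProduct.map_id, LinearMap.id_apply]
    rw [← hy, pent_apply, mo4ap, LinearEquiv.symm_apply_apply, map_fst_fst, m12c,
      ← map_fst_fst, pent_apply, ← TensorProduct.map_map_assoc]
    simp only [TensorProduct.map_id]
  have eQ3 : ∀ u : V ⊗[k] (V ⊗[k] V),
      (TensorProduct.assoc k V V (V ⊗[k] V)) (map φ LinearMap.id u) =
        map LinearMap.id (TensorProduct.assoc k V V V).toLinearMap
          ((TensorProduct.assoc k V (V ⊗[k] V) V)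
            (map (mapFst k V φ) LinearMap.id ((TensorProduct.assoc k V V V).symm u))) := by
    intro u
    simp only [mapFst]
    rw [← map_fst_fst, pent_apply, ← TensorProduct.map_map_assoc]
    simp only [TensorProduct.map_id, LinearEquiv.apply_symm_apply]
  have eL2 : ∀ u : V ⊗[k] (V ⊗[k] V),
      map12of4 k V σ.toLinearMap
          (map LinearMap.id (map12 k V σ.toLinearMap)
            ((TensorProduct.assoc k V V (V ⊗[k] V)) (map φ LinearMap.id u))) =
        map LinearMap.id (mapFst k V φ) (map12 k V σ.toLinearMap u) := by
    intro u
    rw [eQ3, eQ2, map_fst_fst, eQ1, map_fst_fst, h1, ← map_fst_fst, eQ4, m12ap]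
  apply LinearMap.ext; intro x
  simp only [LinearMap.comp_apply]
  rw [e1, e2, eC1, eC2, eL2, e6, ccs]
end

section
/- There exists a k-algebra homomorphism η : U → U^op_σ satisfying η(x_i) = −x_i for all i = 1, …, n; equivalently, there is a k-linear map κ : U → U with κ(1) = 1, κ(x_i) = −x_i for all i, and κ(a b) = q^{c(deg a, deg b)} κ(b) κ(a) for all homogeneous a, b ∈ U. -/
open scoped TensorProduct

private lemma cartanA_symm (n : ℕ) (i j : Fin n) : cartanA n i j = cartanA n j i := by
  unfold cartanA
  rcases eq_or_ne i j with h | h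
  · simp [h]
  · simp [h, h.symm, or_comm]

private lemma cartanA_diag (n : ℕ) (i : Fin n) : cartanA n i i = 2 := by simp [cartanA]

private def eexp {n : ℕ} (α : Fin n → ℕ) : ℤ :=
  (∑ i : Fin n, ∑ j : Fin n, if i < j then cartanA n i j * α i * α j else 0)
  + ∑ i : Fin n, (α i : ℤ) ^ 2 - ∑ i : Fin n, (α i : ℤ)

private lemma cpair_eq {n : ℕ} (α β : Fin n → ℕ) :
    cpair α β = (∑ i : Fin n, ∑ j : Fin n, if i < j then cartanA n i j * (α i : ℤ) * (β j : ℤ) else 0)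
      + (∑ i : Fin n, ∑ j : Fin n, if i < j then cartanA n i j * (β i : ℤ) * (α j : ℤ) else 0)
      + 2 * ∑ i : Fin n, (α i : ℤ) * (β i : ℤ) := by
  have step : cpair α β
      = (∑ i : Fin n, ∑ j : Fin n, if i < j then cartanA n i j * (α i : ℤ) * (β j : ℤ) else 0)
      + (∑ i : Fin n, ∑ j : Fin n, if j < i then cartanA n i j * (α i : ℤ) * (β j : ℤ) else 0)
      + (∑ i : Fin n, ∑ j : Fin n, if i = j then cartanA n i j * (α i : ℤ) * (β j : ℤ) else 0) := by
    unfold cpair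
    simp only [← Finset.sum_add_distrib]
    refine Finset.sum_congr rfl fun i _ => Finset.sum_congr rfl fun j _ => ?_
    rcases lt_trichotomy i j with h | h | h
    · simp [h, h.ne, not_lt_of_gt h]
    · simp [h, lt_irrefl]
    · simp [h, h.ne', not_lt_of_gt h]
  rw [step]
  congr 1
  · congr 1
    rw [Finset.sum_comm]
    refine Finset.sum_congr rfl fun i _ => Finset.sum_congr rfl fun j _ => ?_
    split
    · rw [cartanA_symm]; ring
    · rfl
  · rw [Finset.mul_sum]
    simp only [Finset.sum_ite_eq, Finset.mem_univ, if_true]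
    refine Finset.sum_congr rfl fun i _ => ?_
    rw [cartanA_diag]; ring

private lemma eexp_single {n : ℕ} (i : Fin n) : eexp (Pi.single i 1) = 0 := by
  unfold eexp
  have h1 : (∑ a : Fin n, ∑ b : Fin n,
      if a < b then cartanA n a b * ((Pi.single i 1 : Fin n → ℕ) a : ℤ) * ((Pi.single i 1 : Fin n → ℕ) b : ℤ) else 0) = 0 := by
    refine Finset.sum_eq_zero fun a _ => Finset.sum_eq_zero fun b _ => ?_
    split
    · rename_i hab
      rcases eq_or_ne a i with rfl | ha
      · have : b ≠ a := hab.ne'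
        simp [Pi.single_apply, this]
      · simp [Pi.single_apply, ha]
    · rfl
  have h2 : (∑ a : Fin n, ((Pi.single i 1 : Fin n → ℕ) a : ℤ) ^ 2) = 1 := by
    simp [Pi.single_apply, apply_ite, Finset.sum_ite_eq']
  have h3 : (∑ a : Fin n, ((Pi.single i 1 : Fin n → ℕ) a : ℤ)) = 1 := by
    simp [Pi.single_apply, apply_ite, Finset.sum_ite_eq']
  rw [h1, h2, h3]; ring

private lemma eexp_add {n : ℕ} (α β : Fin n → ℕ) :
    eexp (α + β) = eexp α + eexp β + cpair α β := by
  unfold eexp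
  rw [cpair_eq]
  have hT : (∑ i : Fin n, ∑ j : Fin n,
        if i < j then cartanA n i j * ((α + β) i : ℤ) * ((α + β) j : ℤ) else 0)
      = (∑ i : Fin n, ∑ j : Fin n, if i < j then cartanA n i j * (α i : ℤ) * (α j : ℤ) else 0)
      + (∑ i : Fin n, ∑ j : Fin n, if i < j then cartanA n i j * (β i : ℤ) * (β j : ℤ) else 0)
      + ((∑ i : Fin n, ∑ j : Fin n, if i < j then cartanA n i j * (α i : ℤ) * (β j : ℤ) else 0)
      + (∑ i : Fin n, ∑ j : Fin n, if i < j then cartanA n i j * (β i : ℤ) * (α j : ℤ) else 0)) := by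
    simp only [← Finset.sum_add_distrib]
    refine Finset.sum_congr rfl fun i _ => Finset.sum_congr rfl fun j _ => ?_
    split
    · push_cast [Pi.add_apply]; ring
    · simp
  have hQ : (∑ i : Fin n, (((α + β) i : ℕ) : ℤ) ^ 2)
      = (∑ i : Fin n, (α i : ℤ) ^ 2) + (∑ i : Fin n, (β i : ℤ) ^ 2)
        + 2 * ∑ i : Fin n, (α i : ℤ) * (β i : ℤ) := by
    rw [Finset.mul_sum, ← Finset.sum_add_distrib, ← Finset.sum_add_distrib]
    refine Finset.sum_congr rfl fun i _ => ?_
    push_cast [Pi.add_apply]; ring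
  have hS : (∑ i : Fin n, (((α + β) i : ℕ) : ℤ))
      = (∑ i : Fin n, (α i : ℤ)) + (∑ i : Fin n, (β i : ℤ)) := by
    rw [← Finset.sum_add_distrib]
    refine Finset.sum_congr rfl fun i _ => ?_
    push_cast [Pi.add_apply]; ring
  rw [hT, hQ, hS]; ring

private lemma sum_add_fn {n : ℕ} (α β : Fin n → ℕ) :
    (∑ i : Fin n, (α + β) i) = (∑ i : Fin n, α i) + ∑ i : Fin n, β i := by
  simp [Finset.sum_add_distrib]

private lemma sum_single {n : ℕ} (i : Fin n) : (∑ j : Fin n, (Pi.single i 1 : Fin n → ℕ) j) = 1 := by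
  simp [Pi.single_apply, Finset.sum_ite_eq']

/-- there exists a `k`-algebra homomorphism `η : U → U^op_σ` with
`η(x_i) = −x_i`; equivalently, there is a `k`-linear map `κ : U → U` with `κ(1) = 1`,
`κ(x_i) = −x_i` for all `i`, and `κ(a b) = q^{c(deg a, deg b)} κ(b) κ(a)` for all
homogeneous `a, b ∈ U`. -/
theorem stmt10 (k U : Type) [CommRing k] (q : kˣ) (n : ℕ) (hn : 1 ≤ n)
    [Ring U] [Algebra k U] (x : Fin n → U) (hU : IsUqPlus k q U x)
    (𝒜 : (Fin n → ℕ) → Submodule k U) [GradedAlgebra 𝒜]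
    (hx𝒜 : ∀ i : Fin n, x i ∈ 𝒜 (Pi.single i 1)) :
    ∃ κ : U →ₗ[k] U,
      κ 1 = 1 ∧
      (∀ i : Fin n, κ (x i) = -x i) ∧
      (∀ (α β : Fin n → ℕ) (a b : U), a ∈ 𝒜 α → b ∈ 𝒜 β →
        κ (a * b) = ((q ^ cpair α β : kˣ) : k) • (κ b * κ a)) := by
  obtain ⟨hserre, -, huniv⟩ := hU
  -- the opposite generators satisfy the Serre relations
  have hy : serreCond k q (fun i => MulOpposite.op (x i)) := by
    constructor
    · intro i j h
      have h1 := hserre.1 i j h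
      simp only [← MulOpposite.op_mul]
      rw [h1]
    · intro i j h
      have h1 := hserre.2 i j h
      apply MulOpposite.unop_injective
      simp only [MulOpposite.unop_add, MulOpposite.unop_sub, MulOpposite.unop_mul,
        MulOpposite.unop_smul, MulOpposite.unop_pow, MulOpposite.unop_op, MulOpposite.unop_zero]
      rw [show x j * x i ^ 2 - ((q : k) + ((q⁻¹ : kˣ) : k)) • (x i * (x j * x i)) + x i ^ 2 * x j
          = x i ^ 2 * x j - ((q : k) + ((q⁻¹ : kˣ) : k)) • (x i * x j * x i) + x j * x i ^ 2 from by
        rw [mul_assoc]; abel]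
      exact h1
  obtain ⟨τ, hτ⟩ := huniv (Uᵐᵒᵖ) (fun i => MulOpposite.op (x i)) hy
  -- the antihomomorphism τ' : U → U
  set τ' : U →ₗ[k] U :=
    (MulOpposite.opLinearEquiv k).symm.toLinearMap ∘ₗ τ.toLinearMap with hτ'def
  have hτ'mul : ∀ a b : U, τ' (a * b) = τ' b * τ' a := by
    intro a b
    simp [hτ'def, map_mul]
  have hτ'one : τ' 1 = 1 := by simp [hτ'def]
  have hτ'x : ∀ i, τ' (x i) = x i := by
    intro i
    simp [hτ'def, hτ i]
  -- the scaling factors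
  set u : (Fin n → ℕ) → k := fun α => (-1 : k) ^ (∑ i, α i) * ((q ^ eexp α : kˣ) : k) with hu
  have hu_add : ∀ α β : Fin n → ℕ,
      u (α + β) = ((q ^ cpair α β : kˣ) : k) * (u α * u β) := by
    intro α β
    simp only [hu, sum_add_fn, eexp_add, pow_add, zpow_add]
    push_cast
    ring
  have hu_single : ∀ i : Fin n, u (Pi.single i 1) = -1 := by
    intro i
    simp [hu, sum_single, eexp_single]
  -- the map κ
  set κ : U →ₗ[k] U :=
    (DirectSum.toModule k (Fin n → ℕ) U (fun α => u α • (τ' ∘ₗ (𝒜 α).subtype))) ∘ₗ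
      (DirectSum.decomposeLinearEquiv 𝒜).toLinearMap with hκdef
  have hκ : ∀ (α : Fin n → ℕ) (a : U), a ∈ 𝒜 α → κ a = u α • τ' a := by
    intro α a ha
    simp only [hκdef, LinearMap.comp_apply, LinearEquiv.coe_coe,
      DirectSum.decomposeLinearEquiv_apply, DirectSum.decompose_of_mem 𝒜 ha,
      ← DirectSum.lof_eq_of k, DirectSum.toModule_lof]
    simp
  refine ⟨κ, ?_, ?_, ?_⟩
  · have h1 : (1 : U) ∈ 𝒜 0 := SetLike.one_mem_graded 𝒜
    have he0 : eexp (0 : Fin n → ℕ) = 0 := by simp [eexp]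
    have hu0 : u 0 = 1 := by simp [hu, he0]
    rw [hκ 0 1 h1, hτ'one, hu0, one_smul]
  · intro i
    rw [hκ _ _ (hx𝒜 i), hτ'x, hu_single]
    simp
  · intro α β a b ha hb
    rw [hκ _ _ (SetLike.mul_mem_graded ha hb), hκ _ _ ha, hκ _ _ hb, hτ'mul,
      hu_add, smul_mul_assoc, mul_smul_comm]
    simp only [smul_smul]
    congr 1; ring
end
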